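/- For every oriented linear chord diagram C of d chords with ⟨C⟩ ≠ 0, the maximal exponent of ⟨C⟩ is at most d + 2(Γ_{s_A} − 1) and the minimal exponent of ⟨C⟩ is at least −d − 2(Γ_{s_B} − 1); consequently span ⟨C⟩ ≤ 2d + 2(Γ_{s_A} + Γ_{s_B} − 2). -/

import Mathlib

open Equiv LaurentPolynomial Finset

/-- `C` is an oriented linear chord diagram of `d` chords: a set of `d` ordered pairs of
integers whose entries (first and second components together) are exactly `{1, …, 2d}`.
(Together with `C.card = d` this forces all `2d` entries to be pairwise distinct.) -/
def IsOLCD (d : ℕ) (C : Finset (ℤ × ℤ)) : Prop :=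
  C.card = d ∧ (C.image Prod.fst ∪ C.image Prod.snd) = Finset.Icc 1 (2 * (d : ℤ))

/-- The set `R_c` of transpositions of `ℤ` associated to a chord `c = (i, j)` carrying the
label `lbl` (`true` = `A`, `false` = `B`). -/
def Rset (lbl : Bool) (c : ℤ × ℤ) : Set (Equiv.Perm ℤ) :=
  if lbl = decide (c.1 < c.2) then
    {Equiv.swap c.1 (c.2 - 1), Equiv.swap (c.1 - 1) c.2}
  else
    {Equiv.swap c.1 c.2, Equiv.swap (c.1 - 1) (c.2 - 1)}

/-- The subgroup of permutations generated by `⋃_{c ∈ C} R_c`, for a state `s` of `C`. -/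
def stateGroup (C : Finset (ℤ × ℤ)) (s : {c // c ∈ C} → Bool) : Subgroup (Equiv.Perm ℤ) :=
  Subgroup.closure (⋃ c : {c // c ∈ C}, Rset (s c) c.1)

/-- `Γ_s`: the number of orbits of the action of `stateGroup C s` on `{0, 1, …, 2d}`,
counted as the number of distinct orbits of elements of `{0, …, 2d}`. -/
noncomputable def Gamma (d : ℕ) (C : Finset (ℤ × ℤ)) (s : {c // c ∈ C} → Bool) : ℕ :=
  ((fun x : ℤ => MulAction.orbit (stateGroup C s) x) '' Set.Icc (0 : ℤ) (2 * d)).ncard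

/-- `⟨C|s⟩ = A^(|s⁻¹(A)| - |s⁻¹(B)|) * (-A² - A⁻²)^(Γ_s - 1)`. -/
noncomputable def bracketTerm (d : ℕ) (C : Finset (ℤ × ℤ)) (s : {c // c ∈ C} → Bool) :
    LaurentPolynomial ℤ :=
  T (((Finset.univ.filter fun c => s c = true).card : ℤ) -
      ((Finset.univ.filter fun c => s c = false).card : ℤ)) *
    (-T 2 - T (-2)) ^ (Gamma d C s - 1)

/-- The bracket polynomial `⟨C⟩ = Σ_s ⟨C|s⟩`, summing over all `2^d` states of `C`. -/
noncomputable def bracket (d : ℕ) (C : Finset (ℤ × ℤ)) : LaurentPolynomial ℤ :=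
  ∑ s : ({c // c ∈ C} → Bool), bracketTerm d C s

/-- The maximal exponent occurring in a Laurent polynomial (junk value `0` for `f = 0`). -/
noncomputable def maxDeg (f : LaurentPolynomial ℤ) : ℤ := WithBot.unbotD 0 f.coeff.support.max

/-- The minimal exponent occurring in a Laurent polynomial (junk value `0` for `f = 0`). -/
noncomputable def minDeg (f : LaurentPolynomial ℤ) : ℤ := WithTop.untopD 0 f.coeff.support.min

/-- The span of a Laurent polynomial: maximal minus minimal exponent. -/
noncomputable def spanL (f : LaurentPolynomial ℤ) : ℤ := maxDeg f - minDeg f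

/-! The term `⟨C|s⟩` has exponents within `2(Γ_s - 1)` of `|s⁻¹(A)| - |s⁻¹(B)|`. Relabelling one
chord `(i, j)` trades its pair of transpositions for the other pair on the points
`i - 1, i, j - 1, j`; together with the old pair and one further transposition these points are
joined by a path of transpositions, so the new group lies in the old one enlarged by a single
transposition. A single transposition merges at most two orbits, hence `Γ` drops by at most one
per relabelled chord and `Γ_s ≤ Γ_{s_A} + |s⁻¹(B)|`, `Γ_s ≤ Γ_{s_B} + |s⁻¹(A)|`. With
`|s⁻¹(A)| + |s⁻¹(B)| = d` every term of `⟨C⟩` then has exponents in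
`[-d - 2(Γ_{s_B} - 1), d + 2(Γ_{s_A} - 1)]`. -/

open MulAction Pointwise

theorem Set.ncard_image_le_ncard_image_of_factorsThrough {α β γ : Type*} {f : α → β} {g : α → γ}
    {I : Set α} (hI : I.Finite) (h : ∀ x ∈ I, ∀ y ∈ I, g x = g y → f x = f y) :
    (f '' I).ncard ≤ (g '' I).ncard := by
  obtain rfl | ⟨x₀, -⟩ := I.eq_empty_or_nonempty
  · simp
  have : Nonempty α := ⟨x₀⟩
  have hfg : f '' I ⊆ (f ∘ Function.invFunOn g I) '' (g '' I) := by
    rintro _ ⟨x, hx, rfl⟩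
    have hgx : g x ∈ g '' I := Set.mem_image_of_mem g hx
    exact ⟨g x, hgx, h _ (Function.invFunOn_mem hgx) x hx (Function.invFunOn_eq hgx)⟩
  calc (f '' I).ncard ≤ ((f ∘ Function.invFunOn g I) '' (g '' I)).ncard :=
        Set.ncard_le_ncard hfg ((hI.image g).image _)
    _ ≤ (g '' I).ncard := Set.ncard_image_le (hI.image g)

section Orbits

variable {α : Type*}

noncomputable def orbitCount (G : Subgroup (Perm α)) (I : Set α) : ℕ :=
  ((fun x => orbit G x) '' I).ncard

theorem orbitCount_pos (G : Subgroup (Perm α)) {I : Set α} (hI : I.Finite) (hne : I.Nonempty) :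
    0 < orbitCount G I :=
  (Set.ncard_pos (hI.image _)).2 (hne.image _)

theorem orbit_subset_orbit_of_le {G H : Subgroup (Perm α)} (hGH : G ≤ H) (x : α) :
    orbit G x ⊆ orbit H x := by
  rintro _ ⟨⟨g, hg⟩, rfl⟩
  exact ⟨⟨g, hGH hg⟩, rfl⟩

theorem orbitCount_anti {G H : Subgroup (Perm α)} (hGH : G ≤ H) {I : Set α} (hI : I.Finite) :
    orbitCount H I ≤ orbitCount G I :=
  Set.ncard_image_le_ncard_image_of_factorsThrough hI fun x _ y _ hxy =>
    orbit_eq_iff.2 (orbit_subset_orbit_of_le hGH y (hxy ▸ mem_orbit_self x))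

variable [DecidableEq α]

theorem swap_mem_trans {G : Subgroup (Perm α)} {x y z : α} (hxy : swap x y ∈ G)
    (hyz : swap y z ∈ G) : swap x z ∈ G := by
  obtain rfl | hxy' := eq_or_ne x y
  · exact hyz
  obtain rfl | hxz := eq_or_ne x z
  · rw [swap_self]
    exact G.one_mem
  have hconj : swap (swap y z x) (swap y z y) = swap y z * swap x y * (swap y z)⁻¹ :=
    swap_apply_apply _ _ _
  rw [swap_apply_of_ne_of_ne hxy' hxz, swap_apply_left] at hconj
  rw [hconj]
  exact G.mul_mem (G.mul_mem hyz hxy) (G.inv_mem hyz)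

theorem orbit_closure_insert_swap {S : Set (Perm α)} {a b x : α}
    (ha : x ∉ orbit (Subgroup.closure S) a) (hb : x ∉ orbit (Subgroup.closure S) b) :
    orbit (Subgroup.closure (insert (swap a b) S)) x = orbit (Subgroup.closure S) x := by
  set G := Subgroup.closure S
  refine (Set.Subset.antisymm ?_ (orbit_subset_orbit_of_le
    (Subgroup.closure_mono (Set.subset_insert _ _)) x))
  have hstab : Subgroup.closure (insert (swap a b) S) ≤ stabilizer (Perm α) (orbit G x) := by
    rw [Subgroup.closure_le]
    rintro g (rfl | hg)
    · have ha' : a ∉ orbit G x := fun h => ha (mem_orbit_symm.1 h)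
      have hb' : b ∉ orbit G x := fun h => hb (mem_orbit_symm.1 h)
      refine mem_stabilizer_set.2 fun y => ?_
      show swap a b y ∈ orbit G x ↔ y ∈ orbit G x
      rw [swap_apply_def]
      split_ifs with hya hyb
      · simp only [hya, ha', hb']
      · simp only [hyb, ha', hb']
      · rfl
    · refine mem_stabilizer_set.2 fun y => ?_
      show ((⟨g, Subgroup.subset_closure hg⟩ : G) • y) ∈ orbit G x ↔ y ∈ orbit G x
      rw [mem_orbit_symm, orbit_smul, mem_orbit_symm]
  rintro _ ⟨⟨g, hg⟩, rfl⟩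
  exact (mem_stabilizer_set.1 (hstab hg) x).2 (mem_orbit_self x)

theorem orbit_eq_of_orbit_closure_insert_swap_eq {S : Set (Perm α)} {a b x y : α}
    (hx : x ∉ orbit (Subgroup.closure S) a) (hy : y ∉ orbit (Subgroup.closure S) a)
    (hxy : orbit (Subgroup.closure (insert (swap a b) S)) x =
      orbit (Subgroup.closure (insert (swap a b) S)) y) :
    orbit (Subgroup.closure S) x = orbit (Subgroup.closure S) y := by
  have merged {u v : α} (hua : u ∉ orbit (Subgroup.closure S) a)
      (hub : u ∉ orbit (Subgroup.closure S) b)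
      (huv : orbit (Subgroup.closure (insert (swap a b) S)) u =
        orbit (Subgroup.closure (insert (swap a b) S)) v) :
      orbit (Subgroup.closure S) v = orbit (Subgroup.closure S) u :=
    orbit_eq_iff.2 (by rw [← orbit_closure_insert_swap hua hub, huv]; exact mem_orbit_self v)
  by_cases hxb : x ∈ orbit (Subgroup.closure S) b
  · by_cases hyb : y ∈ orbit (Subgroup.closure S) b
    · rw [orbit_eq_iff.2 hxb, orbit_eq_iff.2 hyb]
    · exact merged hy hyb hxy.symm
  · exact (merged hx hxb hxy).symm

theorem orbitCount_le_orbitCount_closure_insert_swap_add_one (S : Set (Perm α)) (a b : α)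
    {I : Set α} (hI : I.Finite) :
    orbitCount (Subgroup.closure S) I ≤
      orbitCount (Subgroup.closure (insert (swap a b) S)) I + 1 := by
  set G := Subgroup.closure S
  set H := Subgroup.closure (insert (swap a b) S)
  set I' := I \ orbit G a
  have hsplit : (fun x => orbit G x) '' I ⊆ insert (orbit G a) ((fun x => orbit G x) '' I') := by
    rintro _ ⟨x, hxI, rfl⟩
    by_cases hxa : x ∈ orbit G a
    · exact Or.inl (orbit_eq_iff.2 hxa)
    · exact Or.inr ⟨x, ⟨hxI, hxa⟩, rfl⟩
  have hI' : I'.Finite := hI.sdiff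
  calc orbitCount G I
      ≤ (insert (orbit G a) ((fun x => orbit G x) '' I')).ncard :=
        Set.ncard_le_ncard hsplit ((hI'.image _).insert _)
    _ ≤ ((fun x => orbit G x) '' I').ncard + 1 := Set.ncard_insert_le _ _
    _ ≤ ((fun x => orbit H x) '' I').ncard + 1 := by
        gcongr 1
        exact Set.ncard_image_le_ncard_image_of_factorsThrough hI' fun x hx y hy hxy =>
          orbit_eq_of_orbit_closure_insert_swap_eq hx.2 hy.2 hxy
    _ ≤ orbitCount H I + 1 := by
        gcongr 1
        exact Set.ncard_le_ncard (Set.image_mono Set.sdiff_subset) (hI.image _)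

end Orbits

theorem exists_Rset_subset_closure_insert_swap (lbl lbl' : Bool) (c : ℤ × ℤ) :
    ∃ a b : ℤ, Rset lbl' c ⊆ Subgroup.closure (insert (swap a b) (Rset lbl c)) := by
  rcases c with ⟨i, j⟩
  simp only [Rset]
  split_ifs
  · exact ⟨i, j, (Set.subset_insert _ _).trans Subgroup.subset_closure⟩
  · refine ⟨i, j - 1, Set.insert_subset_iff.2 ⟨Subgroup.subset_closure (by simp),
      Set.singleton_subset_iff.2 ?_⟩⟩
    refine swap_mem_trans (swap_mem_trans (y := j - 1) ?_ ?_) (y := i) ?_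
    · exact Subgroup.subset_closure (by simp)
    · rw [swap_comm]
      exact Subgroup.subset_closure (by simp)
    · exact Subgroup.subset_closure (by simp)
  · refine ⟨i, j, Set.insert_subset_iff.2 ⟨Subgroup.subset_closure (by simp),
      Set.singleton_subset_iff.2 ?_⟩⟩
    refine swap_mem_trans (swap_mem_trans (y := j) ?_ ?_) (y := i) ?_
    · exact Subgroup.subset_closure (by simp)
    · rw [swap_comm]
      exact Subgroup.subset_closure (by simp)
    · exact Subgroup.subset_closure (by simp)
  · exact ⟨i, j, (Set.subset_insert _ _).trans Subgroup.subset_closure⟩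

theorem exists_stateGroup_update_le_closure_insert_swap {C : Finset (ℤ × ℤ)}
    (s : {c // c ∈ C} → Bool) (c₀ : {c // c ∈ C}) (b : Bool) :
    ∃ x y : ℤ, stateGroup C (Function.update s c₀ b) ≤
      Subgroup.closure (insert (swap x y) (⋃ c : {c // c ∈ C}, Rset (s c) c.1)) := by
  obtain ⟨x, y, hxy⟩ := exists_Rset_subset_closure_insert_swap (s c₀) b c₀.1
  refine ⟨x, y, (Subgroup.closure_le _).2 (Set.iUnion_subset fun c => ?_)⟩
  obtain rfl | hc := eq_or_ne c c₀
  · rw [Function.update_self]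
    exact hxy.trans (Subgroup.closure_mono (Set.insert_subset_insert
      (Set.subset_iUnion (fun c : {c // c ∈ C} => Rset (s c) c.1) c)))
  · rw [Function.update_of_ne hc]
    exact (Set.subset_iUnion (fun c : {c // c ∈ C} => Rset (s c) c.1) c).trans
      ((Set.subset_insert _ _).trans Subgroup.subset_closure)

theorem Gamma_le_Gamma_update_add_one (d : ℕ) (C : Finset (ℤ × ℤ)) (s : {c // c ∈ C} → Bool)
    (c₀ : {c // c ∈ C}) (b : Bool) :
    Gamma d C s ≤ Gamma d C (Function.update s c₀ b) + 1 := by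
  obtain ⟨x, y, hle⟩ := exists_stateGroup_update_le_closure_insert_swap s c₀ b
  have hI : (Set.Icc (0 : ℤ) (2 * d)).Finite := Set.finite_Icc _ _
  calc Gamma d C s
      ≤ orbitCount (Subgroup.closure (insert (swap x y) (⋃ c : {c // c ∈ C}, Rset (s c) c.1)))
          (Set.Icc 0 (2 * d)) + 1 :=
        orbitCount_le_orbitCount_closure_insert_swap_add_one _ x y hI
    _ ≤ Gamma d C (Function.update s c₀ b) + 1 := by
        gcongr 1
        exact orbitCount_anti hle hI

theorem le_add_hammingDist_of_le_update_add_one {ι β : Type*} [Fintype ι] [DecidableEq ι]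
    [DecidableEq β] {f : (ι → β) → ℕ} (hf : ∀ s i b, f s ≤ f (Function.update s i b) + 1)
    (s t : ι → β) : f s ≤ f t + hammingDist s t := by
  suffices ∀ (D : Finset ι) (s : ι → β), (∀ i ∉ D, s i = t i) → f s ≤ f t + D.card from
    this _ s fun i hi => by simpa using hi
  intro D
  induction D using Finset.induction_on with
  | empty =>
    intro s hs
    rw [funext fun i => hs i (Finset.notMem_empty i)]
    simp
  | insert i D hiD ih =>
    intro s hs
    have hs' : ∀ j ∉ D, Function.update s i (t i) j = t j := by
      intro j hj
      obtain rfl | hji := eq_or_ne j i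
      · exact Function.update_self ..
      · rw [Function.update_of_ne hji]
        exact hs j (by simp [hji, hj])
    rw [Finset.card_insert_of_notMem hiD]
    linarith [ih _ hs', hf s i (t i)]

theorem Gamma_le_Gamma_add_hammingDist (d : ℕ) (C : Finset (ℤ × ℤ))
    (s t : {c // c ∈ C} → Bool) : Gamma d C s ≤ Gamma d C t + hammingDist s t :=
  le_add_hammingDist_of_le_update_add_one (Gamma_le_Gamma_update_add_one d C) s t

section SupportBounds

variable {R : Type*} [Semiring R]

theorem support_T_subset_Icc (n : ℤ) : (T n : R[T;T⁻¹]).coeff.support ⊆ Icc n n := by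
  rw [Finset.Icc_self]
  exact Finsupp.support_single_subset

theorem support_mul_subset_Icc {f g : R[T;T⁻¹]} {a b a' b' : ℤ}
    (hf : f.coeff.support ⊆ Icc a b) (hg : g.coeff.support ⊆ Icc a' b') :
    (f * g).coeff.support ⊆ Icc (a + a') (b + b') :=
  (AddMonoidAlgebra.support_coeff_mul_subset f g).trans
    ((Finset.add_subset_add hf hg).trans (Finset.Icc_add_Icc_subset _ _ _ _))

theorem support_pow_subset_Icc {f : R[T;T⁻¹]} {a b : ℤ} (hf : f.coeff.support ⊆ Icc a b)
    (k : ℕ) : (f ^ k).coeff.support ⊆ Icc (k * a) (k * b) := by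
  induction k with
  | zero => simpa [← T_zero] using support_T_subset_Icc (R := R) 0
  | succ k ih =>
    rw [pow_succ]
    convert support_mul_subset_Icc ih hf using 2 <;> push_cast <;> ring

theorem maxDeg_le_of_support_subset {f : LaurentPolynomial ℤ} (hf : f ≠ 0) {a b : ℤ}
    (h : f.coeff.support ⊆ Icc a b) : maxDeg f ≤ b := by
  obtain ⟨m, hm⟩ := Finset.max_of_nonempty (Finsupp.support_nonempty_iff.2
    (AddMonoidAlgebra.coeff_eq_zero.not.2 hf))
  rw [maxDeg, hm, WithBot.unbotD_coe]
  exact (Finset.mem_Icc.1 (h (Finset.mem_of_max hm))).2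

theorem le_minDeg_of_support_subset {f : LaurentPolynomial ℤ} (hf : f ≠ 0) {a b : ℤ}
    (h : f.coeff.support ⊆ Icc a b) : a ≤ minDeg f := by
  obtain ⟨m, hm⟩ := Finset.min_of_nonempty (Finsupp.support_nonempty_iff.2
    (AddMonoidAlgebra.coeff_eq_zero.not.2 hf))
  rw [minDeg, hm, WithTop.untopD_coe]
  exact (Finset.mem_Icc.1 (h (Finset.mem_of_min hm))).1

end SupportBounds

theorem support_loop_subset_Icc :
    (-T 2 - T (-2) : LaurentPolynomial ℤ).coeff.support ⊆ Icc (-2) 2 := by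
  intro n hn
  rw [AddMonoidAlgebra.coeff_sub, AddMonoidAlgebra.coeff_neg] at hn
  rcases Finset.mem_union.1 (Finsupp.support_sub hn) with h | h
  · rw [Finsupp.support_neg] at h
    have := support_T_subset_Icc (R := ℤ) 2 h
    simp only [Finset.mem_Icc] at this ⊢
    omega
  · have := support_T_subset_Icc (R := ℤ) (-2) h
    simp only [Finset.mem_Icc] at this ⊢
    omega

theorem one_le_Gamma (d : ℕ) (C : Finset (ℤ × ℤ)) (s : {c // c ∈ C} → Bool) :
    1 ≤ Gamma d C s :=
  orbitCount_pos _ (Set.finite_Icc _ _) ⟨0, le_rfl, by positivity⟩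

theorem card_true_add_card_false {C : Finset (ℤ × ℤ)} (s : {c // c ∈ C} → Bool) :
    #{c | s c = true} + #{c | s c = false} = C.card := by
  simpa using Finset.card_filter_add_card_filter_not (s := univ) fun c => s c = true

theorem support_bracketTerm_subset {d : ℕ} {C : Finset (ℤ × ℤ)} (hd : C.card = d)
    (s : {c // c ∈ C} → Bool) :
    (bracketTerm d C s).coeff.support ⊆
      Icc (-d - 2 * ((Gamma d C (fun _ => false) : ℤ) - 1))
        (d + 2 * ((Gamma d C (fun _ => true) : ℤ) - 1)) := by
  have hA := Gamma_le_Gamma_add_hammingDist d C s fun _ => true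
  have hB := Gamma_le_Gamma_add_hammingDist d C s fun _ => false
  have hdistA : hammingDist s (fun _ => true) = #{c | s c = false} := by simp [hammingDist]
  have hdistB : hammingDist s (fun _ => false) = #{c | s c = true} := by simp [hammingDist]
  have hcard := card_true_add_card_false s
  have := one_le_Gamma d C s
  have := one_le_Gamma d C fun _ => true
  have := one_le_Gamma d C fun _ => false
  refine (support_mul_subset_Icc (support_T_subset_Icc _)
    (support_pow_subset_Icc support_loop_subset_Icc _)).trans (Finset.Icc_subset_Icc ?_ ?_) <;>
    omega

theorem support_bracket_subset {d : ℕ} {C : Finset (ℤ × ℤ)} (hd : C.card = d) :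
    (bracket d C).coeff.support ⊆
      Icc (-d - 2 * ((Gamma d C (fun _ => false) : ℤ) - 1))
        (d + 2 * ((Gamma d C (fun _ => true) : ℤ) - 1)) := by
  rw [bracket, AddMonoidAlgebra.coeff_sum]
  exact Finsupp.support_finsetSum.trans
    (Finset.biUnion_subset.2 fun s _ => support_bracketTerm_subset hd s)

/-- for `⟨C⟩ ≠ 0`, the maximal exponent of `⟨C⟩` is at most `d + 2(Γ_{s_A} - 1)`,
the minimal exponent is at least `-d - 2(Γ_{s_B} - 1)`, and consequently
`span ⟨C⟩ ≤ 2d + 2(Γ_{s_A} + Γ_{s_B} - 2)`. -/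
theorem bracket_deg_bounds (d : ℕ) (C : Finset (ℤ × ℤ)) (hC : IsOLCD d C)
    (h : bracket d C ≠ 0) :
    maxDeg (bracket d C) ≤ (d : ℤ) + 2 * ((Gamma d C (fun _ => true) : ℤ) - 1) ∧
    -(d : ℤ) - 2 * ((Gamma d C (fun _ => false) : ℤ) - 1) ≤ minDeg (bracket d C) ∧
    spanL (bracket d C) ≤ 2 * (d : ℤ) +
      2 * ((Gamma d C (fun _ => true) : ℤ) + (Gamma d C (fun _ => false) : ℤ) - 2) := by
  have hsupp := support_bracket_subset hC.1
  have hmax := maxDeg_le_of_support_subset h hsupp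
  have hmin := le_minDeg_of_support_subset h hsupp
  refine ⟨hmax, hmin, ?_⟩
  rw [spanL]
  linarith
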